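/- arXiv:2309.11744 — 4 statements merged into one kernel-verified Lean document; each statement's English description precedes it below -/
import Mathlib

section
/- Let P and Q be probability measures on a measurable space S, let π be a finite measure on S with π(S) > 0, and suppose P(A) ≥ π(A) and Q(A) ≥ π(A) for all measurable A. Then for any bounded measurable function h : S → ℝ, |∫ h dP − ∫ h dQ| ≤ ‖h‖_sp · (1 − π(S)), where ‖h‖_sp = sup h − inf h is the span seminorm. -/
/-! The common part `π` cancels: `∫ h dP - ∫ h dQ = ∫ h d(P - π) - ∫ h d(Q - π)`, and `P - π`,
`Q - π` are measures of the same mass `1 - π(S)`, so both integrals lie in the interval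
`[inf h, sup h] · (1 - π(S))`, whose length is the claimed bound. -/

open MeasureTheory

namespace MeasureTheory

variable {S : Type*} [MeasurableSpace S] {μ ν : Measure S} {h : S → ℝ}

lemma measureReal_sub_apply [IsFiniteMeasure μ] (hle : ν ≤ μ) {s : Set S} (hs : MeasurableSet s) :
    (μ - ν).real s = μ.real s - ν.real s := by
  have := isFiniteMeasure_of_le μ hle
  rw [measureReal_def, Measure.sub_apply hs hle,
    ENNReal.toReal_sub_of_le (hle s) (measure_ne_top μ s), measureReal_def, measureReal_def]

lemma integral_eq_integral_sub_add_integral [IsFiniteMeasure ν] (hle : ν ≤ μ)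
    (hint : Integrable h μ) :
    ∫ x, h x ∂μ = ∫ x, h x ∂(μ - ν) + ∫ x, h x ∂ν := by
  conv_lhs => rw [← Measure.sub_add_cancel_of_le hle]
  exact integral_add_measure (hint.mono_measure Measure.sub_le) (hint.mono_measure hle)

lemma integral_le_ciSup_mul_measureReal_univ [IsFiniteMeasure μ] (hint : Integrable h μ)
    (hb : BddAbove (Set.range h)) :
    ∫ x, h x ∂μ ≤ (⨆ x, h x) * μ.real Set.univ := by
  calc ∫ x, h x ∂μ ≤ ∫ _, (⨆ x, h x) ∂μ := integral_mono hint (integrable_const _) (le_ciSup hb)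
    _ = (⨆ x, h x) * μ.real Set.univ := by rw [integral_const, smul_eq_mul, mul_comm]

lemma ciInf_mul_measureReal_univ_le_integral [IsFiniteMeasure μ] (hint : Integrable h μ)
    (hb : BddBelow (Set.range h)) :
    (⨅ x, h x) * μ.real Set.univ ≤ ∫ x, h x ∂μ := by
  calc (⨅ x, h x) * μ.real Set.univ = ∫ _, (⨅ x, h x) ∂μ := by
        rw [integral_const, smul_eq_mul, mul_comm]
    _ ≤ ∫ x, h x ∂μ := integral_mono (integrable_const _) hint (ciInf_le hb)

lemma abs_integral_sub_integral_le_of_measureReal_univ_eq [IsFiniteMeasure μ] [IsFiniteMeasure ν]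
    (hμ : Integrable h μ) (hν : Integrable h ν) (hbA : BddAbove (Set.range h))
    (hbB : BddBelow (Set.range h)) (hmass : μ.real Set.univ = ν.real Set.univ) :
    |∫ x, h x ∂μ - ∫ x, h x ∂ν| ≤ ((⨆ x, h x) - ⨅ x, h x) * μ.real Set.univ := by
  have hμA := integral_le_ciSup_mul_measureReal_univ hμ hbA
  have hμB := ciInf_mul_measureReal_univ_le_integral hμ hbB
  have hνA := integral_le_ciSup_mul_measureReal_univ hν hbA
  have hνB := ciInf_mul_measureReal_univ_le_integral hν hbB
  rw [← hmass] at hνA hνB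
  rw [abs_sub_le_iff]
  constructor <;> linarith

end MeasureTheory

theorem integral_diff_le_spanSeminorm_of_minorization_general
    {S : Type*} [MeasurableSpace S]
    (P Q π : Measure S) [IsProbabilityMeasure P] [IsProbabilityMeasure Q]
    (hP : ∀ A : Set S, MeasurableSet A → π A ≤ P A)
    (hQ : ∀ A : Set S, MeasurableSet A → π A ≤ Q A)
    (h : S → ℝ) (hmeas : Measurable h) (hbdd : ∃ C, ∀ x, |h x| ≤ C) :
    |(∫ x, h x ∂P) - ∫ x, h x ∂Q| ≤
      ((⨆ x, h x) - ⨅ x, h x) * (1 - (π Set.univ).toReal) := by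
  obtain ⟨C, hC⟩ := hbdd
  have hbA : BddAbove (Set.range h) := ⟨C, by rintro _ ⟨x, rfl⟩; exact (abs_le.1 (hC x)).2⟩
  have hbB : BddBelow (Set.range h) := ⟨-C, by rintro _ ⟨x, rfl⟩; exact (abs_le.1 (hC x)).1⟩
  have hint (ρ : Measure S) [IsFiniteMeasure ρ] : Integrable h ρ :=
    .of_bound hmeas.aestronglyMeasurable C (.of_forall hC)
  have hPπ : π ≤ P := Measure.le_iff.2 hP
  have hQπ : π ≤ Q := Measure.le_iff.2 hQ
  have := isFiniteMeasure_of_le P hPπ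
  have hmass (ρ : Measure S) [IsProbabilityMeasure ρ] (hle : π ≤ ρ) :
      (ρ - π).real Set.univ = 1 - (π Set.univ).toReal := by
    rw [measureReal_sub_apply hle MeasurableSet.univ, probReal_univ, measureReal_def]
  rw [integral_eq_integral_sub_add_integral hPπ (hint P),
    integral_eq_integral_sub_add_integral hQπ (hint Q), add_sub_add_right_eq_sub, ← hmass P hPπ]
  exact abs_integral_sub_integral_le_of_measureReal_univ_eq (hint _) (hint _) hbA hbB
    (by rw [hmass P hPπ, hmass Q hQπ])

/-- If `P` and `Q` are probability measures both minorized by a nontrivial finite measure `π`,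
then for any bounded measurable `h`,
`|∫ h dP − ∫ h dQ| ≤ ‖h‖_sp · (1 − π(S))`, where `‖h‖_sp = sup h − inf h`. -/
theorem integral_diff_le_spanSeminorm_of_minorization
    {S : Type*} [MeasurableSpace S] [Nonempty S]
    (P Q π : Measure S) [IsProbabilityMeasure P] [IsProbabilityMeasure Q]
    [IsFiniteMeasure π] (hπpos : 0 < π Set.univ)
    (hP : ∀ A : Set S, MeasurableSet A → π A ≤ P A)
    (hQ : ∀ A : Set S, MeasurableSet A → π A ≤ Q A)
    (h : S → ℝ) (hmeas : Measurable h) (hbdd : ∃ C, ∀ x, |h x| ≤ C) :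
    |(∫ x, h x ∂P) - ∫ x, h x ∂Q| ≤
      ((⨆ x, h x) - ⨅ x, h x) * (1 - (π Set.univ).toReal) :=
  integral_diff_le_spanSeminorm_of_minorization_general P Q π hP hQ h hmeas hbdd
end

section
/- Verification theorem for average cost: let (Z, 𝒰, η, k) be a Markov decision process with bounded measurable stage cost k, and suppose there exist a bounded measurable function h : Z → ℝ and a constant j* satisfying the average cost optimality equation j* + h(z) = inf_{a ∈ U(z)} ( k(z,a) + ∫ h(z₁) η(dz₁ | z, a) ) for all z ∈ Z. Then for every initial state z and every admissible policy g, the long-run average cost limsup_{T→∞} (1/T) Σ_{t=0}^{T−1} E_z^g[k(z_t, a_t)] is at least j*. -/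
open MeasureTheory Filter Topology Finset

/-!
Integrating the optimality equation along the controlled process gives, for every `t`,
`j* + E h(z_t) ≤ E k(z_t, a_t) + E h(z_{t+1})`, because the infimum over `U(z_t)` is at most
its value at the action `a_t` actually taken. Summing over `t < T` telescopes to
`T j* + E h(z_0) ≤ Σ_{t<T} E k(z_t, a_t) + E h(z_T)`, so the `T`-th average cost is at least
`j* - 2‖h‖_∞ / T`, which tends to `j*`.
-/

theorem natCast_mul_add_le_sum_range_add {c v : ℕ → ℝ} {j : ℝ}
    (hstep : ∀ t, j + v t ≤ c t + v (t + 1)) (T : ℕ) :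
    T * j + v 0 ≤ ∑ t ∈ range T, c t + v T := by
  induction T with
  | zero => simp
  | succ T ih =>
    rw [sum_range_succ]
    push_cast
    linarith [hstep T]

theorem le_limsup_average_of_le_add_succ {c v : ℕ → ℝ} {j B C : ℝ}
    (hv : ∀ t, |v t| ≤ B) (hc : ∀ t, c t ≤ C) (hstep : ∀ t, j + v t ≤ c t + v (t + 1)) :
    j ≤ limsup (fun T : ℕ => (1 / (T : ℝ)) * ∑ t ∈ range T, c t) atTop := by
  set avg := fun T : ℕ => (1 / (T : ℝ)) * ∑ t ∈ range T, c t
  have lower : ∀ᶠ T : ℕ in atTop, j - 2 * B / T ≤ avg T := by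
    filter_upwards [eventually_gt_atTop 0] with T hT
    have hT : (0 : ℝ) < T := Nat.cast_pos.mpr hT
    have hsum : T * j - 2 * B ≤ ∑ t ∈ range T, c t := by
      linarith [natCast_mul_add_le_sum_range_add hstep T, (abs_le.mp (hv 0)).1,
        (abs_le.mp (hv T)).2]
    calc j - 2 * B / T = (1 / (T : ℝ)) * (T * j - 2 * B) := by field_simp
      _ ≤ (1 / (T : ℝ)) * ∑ t ∈ range T, c t := by gcongr
  have upper : ∀ᶠ T : ℕ in atTop, avg T ≤ C := by
    filter_upwards [eventually_gt_atTop 0] with T hT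
    have hT : (0 : ℝ) < T := Nat.cast_pos.mpr hT
    calc (1 / (T : ℝ)) * ∑ t ∈ range T, c t ≤ (1 / (T : ℝ)) * (T * C) := by
          gcongr
          simpa using sum_le_card_nsmul (range T) c C fun t _ => hc t
      _ = C := by field_simp
  have hlim : Tendsto (fun T : ℕ => j - 2 * B / T) atTop (𝓝 j) := by
    simpa using tendsto_const_nhds.sub (tendsto_const_div_atTop_nhds_zero_nat (2 * B))
  calc j = limsup (fun T : ℕ => j - 2 * B / T) atTop := hlim.limsup_eq.symm
    _ ≤ limsup avg atTop :=
      limsup_le_limsup lower hlim.isCoboundedUnder_le (isBoundedUnder_of_eventually_le upper)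

theorem abs_integral_le_of_abs_le {α : Type*} [MeasurableSpace α] {μ : Measure α}
    [IsProbabilityMeasure μ] {f : α → ℝ} {C : ℝ} (hf : ∀ x, |f x| ≤ C) :
    |∫ x, f x ∂μ| ≤ C := by
  simpa using norm_integral_le_of_norm_le_const (μ := μ) (f := f) (ae_of_all _ fun x => hf x)

theorem MeasureTheory.Integrable.of_abs_le {α : Type*} [MeasurableSpace α] {μ : Measure α}
    [IsFiniteMeasure μ] {f : α → ℝ} {C : ℝ} (hfm : Measurable f) (hf : ∀ x, |f x| ≤ C) :
    Integrable f μ :=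
  Integrable.of_bound hfm.aestronglyMeasurable C (ae_of_all _ fun x => hf x)

section ACOE

variable {Z A : Type*} [MeasurableSpace Z] {U : Z → Set A} {η : Z → A → Measure Z}
  [∀ z a, IsProbabilityMeasure (η z a)] {k : Z → A → ℝ} {h : Z → ℝ} {jstar Ck Ch : ℝ}

theorem add_le_cost_add_integral_of_acoe (hkb : ∀ z a, |k z a| ≤ Ck) (hhb : ∀ z, |h z| ≤ Ch)
    (hacoe : ∀ z, jstar + h z = sInf ((fun a => k z a + ∫ y, h y ∂η z a) '' U z))
    {z : Z} {a : A} (ha : a ∈ U z) :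
    jstar + h z ≤ k z a + ∫ y, h y ∂η z a := by
  rw [hacoe z]
  refine csInf_le ⟨-(Ck + Ch), ?_⟩ (Set.mem_image_of_mem _ ha)
  rintro _ ⟨b, -, rfl⟩
  linarith [(abs_le.mp (hkb z b)).1, (abs_le.mp (abs_integral_le_of_abs_le (μ := η z b) hhb)).1]

variable [MeasurableSpace A] {Ω : Type*} [MeasurableSpace Ω] {μ : Measure Ω}
  [IsProbabilityMeasure μ]

theorem add_integral_le_integral_cost_add_integral_of_acoe
    (hηm : Measurable fun p : Z × A => η p.1 p.2)
    (hkm : Measurable fun p : Z × A => k p.1 p.2) (hkb : ∀ z a, |k z a| ≤ Ck)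
    (hhm : Measurable h) (hhb : ∀ z, |h z| ≤ Ch)
    (hacoe : ∀ z, jstar + h z = sInf ((fun a => k z a + ∫ y, h y ∂η z a) '' U z))
    {z : Ω → Z} {a : Ω → A} (hz : Measurable z) (ha : Measurable a)
    (hadm : ∀ ω, a ω ∈ U (z ω)) :
    jstar + ∫ ω, h (z ω) ∂μ ≤
      ∫ ω, k (z ω) (a ω) ∂μ + ∫ ω, (∫ y, h y ∂η (z ω) (a ω)) ∂μ := by
  let κ : ProbabilityTheory.Kernel (Z × A) Z := ⟨fun p => η p.1 p.2, hηm⟩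
  have hηh : Measurable fun p : Z × A => ∫ y, h y ∂η p.1 p.2 :=
    (hhm.stronglyMeasurable.integral_kernel (κ := κ)).measurable
  have hza : Measurable fun ω => (z ω, a ω) := hz.prodMk ha
  have int_h : Integrable (fun ω => h (z ω)) μ := .of_abs_le (hhm.comp hz) fun _ => hhb _
  have int_k : Integrable (fun ω => k (z ω) (a ω)) μ :=
    .of_abs_le (hkm.comp hza) fun _ => hkb _ _
  have int_ηh : Integrable (fun ω => ∫ y, h y ∂η (z ω) (a ω)) μ :=
    .of_abs_le (hηh.comp hza) fun _ => abs_integral_le_of_abs_le hhb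
  have hmono := integral_mono (f := fun ω => jstar + h (z ω))
    (g := fun ω => k (z ω) (a ω) + ∫ y, h y ∂η (z ω) (a ω))
    ((integrable_const jstar).add int_h) (int_k.add int_ηh)
    fun ω => add_le_cost_add_integral_of_acoe hkb hhb hacoe (hadm ω)
  rwa [integral_add (integrable_const _) int_h, integral_add int_k int_ηh, integral_const,
    probReal_univ, one_smul] at hmono

end ACOE

/-- Verification theorem (lower bound) for average cost MDPs: if a bounded measurable
function `h` and a constant `j*` satisfy the average cost optimality equation
`j* + h(z) = inf_{a ∈ U(z)} ( k(z,a) + ∫ h dη(·|z,a) )`,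
then for every admissible state-action process (any policy), the long-run average cost
`limsup_T (1/T) Σ_{t<T} E[k(z_t,a_t)]` is at least `j*`. -/
theorem acoe_verification_lower_bound
    {Z A Ω : Type*} [MeasurableSpace Z] [MeasurableSpace A] [MeasurableSpace Ω]
    (U : Z → Set A)
    (η : Z → A → Measure Z) [∀ z a, IsProbabilityMeasure (η z a)]
    (hηm : Measurable fun p : Z × A => η p.1 p.2)
    (k : Z → A → ℝ) (hkm : Measurable fun p : Z × A => k p.1 p.2)
    (hkb : ∃ C, ∀ z a, |k z a| ≤ C)
    (h : Z → ℝ) (hhm : Measurable h) (hhb : ∃ C, ∀ z, |h z| ≤ C)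
    (jstar : ℝ)
    (hacoe : ∀ z : Z,
      jstar + h z = sInf ((fun a => k z a + ∫ y, h y ∂ η z a) '' U z))
    -- an admissible controlled process under an arbitrary (possibly history-dependent,
    -- randomized) policy, starting from any initial state distribution:
    (μ : Measure Ω) [IsProbabilityMeasure μ]
    (zs : ℕ → Ω → Z) (as : ℕ → Ω → A)
    (hzm : ∀ t, Measurable (zs t)) (ham : ∀ t, Measurable (as t))
    (hadm : ∀ t ω, as t ω ∈ U (zs t ω))
    (hdrift : ∀ t : ℕ,
      (∫ ω, h (zs (t + 1) ω) ∂μ) = ∫ ω, (∫ y, h y ∂ η (zs t ω) (as t ω)) ∂μ) :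
    jstar ≤ limsup (fun T : ℕ =>
      (1 / (T : ℝ)) * ∑ t ∈ Finset.range T, ∫ ω, k (zs t ω) (as t ω) ∂μ) atTop := by
  obtain ⟨Ck, hCk⟩ := hkb
  obtain ⟨Ch, hCh⟩ := hhb
  refine le_limsup_average_of_le_add_succ (B := Ch) (C := Ck)
    (fun t => abs_integral_le_of_abs_le (μ := μ) fun ω => hCh (zs t ω))
    (fun t => (abs_le.mp (abs_integral_le_of_abs_le (μ := μ) fun ω => hCk _ (as t ω))).2)
    fun t => ?_
  rw [hdrift t]
  exact add_integral_le_integral_cost_add_integral_of_acoe hηm hkm hCk hhm hCh hacoe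
    (hzm t) (ham t) (hadm t)
end

section
/- Verification theorem (achievability): in the setting of the average cost optimality equation j* + h(z) = inf_{a∈U(z)} ( k(z,a) + ∫ h(z₁) η(dz₁|z,a) ) with h bounded measurable and j* constant, if a stationary Markov policy g* attains the infimum for every z, i.e. j* + h(z) = k(z, g*(z)) + ∫ h(z₁) η(dz₁ | z, g*(z)), then the long-run average cost of g* from any initial state equals j*, and hence g* is average-cost optimal. -/
/-!
Under `g*` the ACOE holds with equality along the process, so taking expectations and using the
drift identity gives `E k(z_t, g*(z_t)) = j* + E h(z_t) - E h(z_{t+1})`. The sum over `t < T`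
telescopes to `T j* + E h(z_0) - E h(z_T)`, and since `h` is bounded the Cesàro averages converge
to `j*`. For any admissible process the ACOE only gives `≥` in each step, so the same telescoping
bounds its average cost from below by `j* - O(1/T)`.
-/

open MeasureTheory Filter Topology Finset

section Cesaro

variable {a b : ℕ → ℝ} {j C : ℝ}

lemma avg_sum_telescope (b : ℕ → ℝ) (j : ℝ) {T : ℕ} (hT : T ≠ 0) :
    (1 / (T : ℝ)) * ∑ t ∈ range T, (j + (b t - b (t + 1))) = j + (b 0 - b T) / T := by
  rw [sum_add_distrib, sum_const, card_range, nsmul_eq_mul, sum_range_sub' b]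
  field_simp

lemma tendsto_avg_telescope (hb : ∀ t, |b t| ≤ C) (j : ℝ) :
    Tendsto (fun T : ℕ => (1 / (T : ℝ)) * ∑ t ∈ range T, (j + (b t - b (t + 1))))
      atTop (𝓝 j) := by
  have hdiff : Tendsto (fun T : ℕ => (b 0 - b T) / T) atTop (𝓝 0) := by
    refine squeeze_zero_norm (fun T => ?_) (tendsto_const_div_atTop_nhds_zero_nat (2 * C))
    rw [Real.norm_eq_abs, abs_div, Nat.abs_cast]
    have hnum : |b 0 - b T| ≤ 2 * C := by linarith [abs_sub (b 0) (b T), hb 0, hb T]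
    exact div_le_div_of_nonneg_right hnum T.cast_nonneg
  have hlim : Tendsto (fun T : ℕ => j + (b 0 - b T) / T) atTop (𝓝 j) := by
    simpa using hdiff.const_add j
  refine hlim.congr' ?_
  filter_upwards [eventually_ne_atTop 0] with T hT
  exact (avg_sum_telescope b j hT).symm

lemma avg_sum_le_of_le {D : ℝ} (ha : ∀ t, a t ≤ D) {T : ℕ} (hT : T ≠ 0) :
    (1 / (T : ℝ)) * ∑ t ∈ range T, a t ≤ D := by
  calc (1 / (T : ℝ)) * ∑ t ∈ range T, a t ≤ (1 / (T : ℝ)) * (T * D) := by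
        gcongr
        simpa using sum_le_sum fun t (_ : t ∈ range T) => ha t
    _ = D := by field_simp

lemma le_limsup_avg_of_telescope_le {D : ℝ} (hb : ∀ t, |b t| ≤ C) (ha : ∀ t, a t ≤ D)
    (hab : ∀ t, j + (b t - b (t + 1)) ≤ a t) :
    j ≤ limsup (fun T : ℕ => (1 / (T : ℝ)) * ∑ t ∈ range T, a t) atTop := by
  have hlim := tendsto_avg_telescope hb j
  rw [← hlim.limsup_eq]
  refine limsup_le_limsup (Eventually.of_forall fun T => ?_) hlim.isCoboundedUnder_le
    (isBoundedUnder_of_eventually_le (a := D) ?_)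
  · exact mul_le_mul_of_nonneg_left (sum_le_sum fun t _ => hab t) (by positivity)
  · filter_upwards [eventually_ne_atTop 0] with T hT
    exact avg_sum_le_of_le ha hT

end Cesaro

section Integral

variable {Ω : Type*} [MeasurableSpace Ω] {μ : Measure Ω} {C : ℝ}

lemma integrable_comp_of_abs_le [IsFiniteMeasure μ] {X : Type*} [MeasurableSpace X] {F : X → ℝ}
    (hF : Measurable F) (hC : ∀ x, |F x| ≤ C) {φ : Ω → X} (hφ : Measurable φ) :
    Integrable (fun ω => F (φ ω)) μ :=
  .of_bound (hF.comp hφ).aestronglyMeasurable C (ae_of_all _ fun ω => hC (φ ω))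

lemma abs_integral_le_of_abs_le_s8 [IsProbabilityMeasure μ] {f : Ω → ℝ} (hC : ∀ ω, |f ω| ≤ C) :
    |∫ ω, f ω ∂μ| ≤ C := by
  simpa using norm_integral_le_of_norm_le_const (μ := μ) (f := f) (C := C) (ae_of_all _ hC)

variable [IsProbabilityMeasure μ] {K H P : Ω → ℝ} {j : ℝ}

lemma integral_eq_add_sub_of_forall_eq (hK : Integrable K μ) (hH : Integrable H μ)
    (hP : Integrable P μ) (heq : ∀ ω, j + H ω = K ω + P ω) :
    ∫ ω, K ω ∂μ = j + (∫ ω, H ω ∂μ - ∫ ω, P ω ∂μ) := by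
  have hint := integral_congr_ae (μ := μ) (ae_of_all μ heq)
  rw [integral_add (integrable_const j) hH, integral_add hK hP, integral_const] at hint
  simp only [probReal_univ, one_smul] at hint
  linarith

lemma add_sub_le_integral_of_forall_le (hK : Integrable K μ) (hH : Integrable H μ)
    (hP : Integrable P μ) (hle : ∀ ω, j + H ω ≤ K ω + P ω) :
    j + (∫ ω, H ω ∂μ - ∫ ω, P ω ∂μ) ≤ ∫ ω, K ω ∂μ := by
  have hint := integral_mono (f := fun ω => j + H ω) (g := fun ω => K ω + P ω)
    ((integrable_const j).add hH) (hK.add hP) hle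
  rw [integral_add (integrable_const j) hH, integral_add hK hP, integral_const] at hint
  simp only [probReal_univ, one_smul] at hint
  linarith

end Integral

lemma measurable_integral_of_measurable_measure {X Y : Type*} [MeasurableSpace X]
    [MeasurableSpace Y] {ν : X → Measure Y} (hν : Measurable ν) {g : Y → ℝ} (hg : Measurable g) :
    Measurable fun x => ∫ y, g y ∂ν x :=
  (hg.stronglyMeasurable.integral_kernel (κ := ⟨ν, hν⟩)).measurable

section ACOE

variable {Z A Ω : Type*} [MeasurableSpace Z] [MeasurableSpace A] [MeasurableSpace Ω]
  {η : Z → A → Measure Z} [∀ z a, IsProbabilityMeasure (η z a)] {k : Z → A → ℝ} {h : Z → ℝ}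
  {Ck Ch j : ℝ} {μ : Measure Ω} [IsProbabilityMeasure μ] {zs : ℕ → Ω → Z} {as : ℕ → Ω → A}
  {t : ℕ}

lemma integrable_integral_comp (hηm : Measurable fun p : Z × A => η p.1 p.2)
    (hhm : Measurable h) (hhb : ∀ z, |h z| ≤ Ch) (hzm : Measurable (zs t))
    (ham : Measurable (as t)) :
    Integrable (fun ω => ∫ y, h y ∂η (zs t ω) (as t ω)) μ :=
  integrable_comp_of_abs_le (measurable_integral_of_measurable_measure hηm hhm)
    (fun _ => abs_integral_le_of_abs_le_s8 hhb) (hzm.prodMk ham)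

lemma integral_cost_eq_of_forall_eq (hηm : Measurable fun p : Z × A => η p.1 p.2)
    (hkm : Measurable fun p : Z × A => k p.1 p.2) (hkb : ∀ z a, |k z a| ≤ Ck)
    (hhm : Measurable h) (hhb : ∀ z, |h z| ≤ Ch)
    (hzm : Measurable (zs t)) (ham : Measurable (as t))
    (hdrift : ∫ ω, h (zs (t + 1) ω) ∂μ = ∫ ω, (∫ y, h y ∂η (zs t ω) (as t ω)) ∂μ)
    (heq : ∀ ω, j + h (zs t ω) = k (zs t ω) (as t ω) + ∫ y, h y ∂η (zs t ω) (as t ω)) :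
    ∫ ω, k (zs t ω) (as t ω) ∂μ =
      j + (∫ ω, h (zs t ω) ∂μ - ∫ ω, h (zs (t + 1) ω) ∂μ) := by
  rw [hdrift]
  exact integral_eq_add_sub_of_forall_eq
    (integrable_comp_of_abs_le hkm (fun p => hkb p.1 p.2) (hzm.prodMk ham))
    (integrable_comp_of_abs_le hhm hhb hzm) (integrable_integral_comp hηm hhm hhb hzm ham) heq

lemma add_sub_le_integral_cost_of_forall_le (hηm : Measurable fun p : Z × A => η p.1 p.2)
    (hkm : Measurable fun p : Z × A => k p.1 p.2) (hkb : ∀ z a, |k z a| ≤ Ck)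
    (hhm : Measurable h) (hhb : ∀ z, |h z| ≤ Ch)
    (hzm : Measurable (zs t)) (ham : Measurable (as t))
    (hdrift : ∫ ω, h (zs (t + 1) ω) ∂μ = ∫ ω, (∫ y, h y ∂η (zs t ω) (as t ω)) ∂μ)
    (hle : ∀ ω, j + h (zs t ω) ≤ k (zs t ω) (as t ω) + ∫ y, h y ∂η (zs t ω) (as t ω)) :
    j + (∫ ω, h (zs t ω) ∂μ - ∫ ω, h (zs (t + 1) ω) ∂μ) ≤ ∫ ω, k (zs t ω) (as t ω) ∂μ := by
  rw [hdrift]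
  exact add_sub_le_integral_of_forall_le
    (integrable_comp_of_abs_le hkm (fun p => hkb p.1 p.2) (hzm.prodMk ham))
    (integrable_comp_of_abs_le hhm hhb hzm) (integrable_integral_comp hηm hhm hhb hzm ham) hle

end ACOE

theorem acoe_verification_achievability_general
    {Z A Ω : Type*} [MeasurableSpace Z] [MeasurableSpace A] [MeasurableSpace Ω]
    (U : Z → Set A)
    (η : Z → A → Measure Z) [∀ z a, IsProbabilityMeasure (η z a)]
    (hηm : Measurable fun p : Z × A => η p.1 p.2)
    (k : Z → A → ℝ) (hkm : Measurable fun p : Z × A => k p.1 p.2)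
    (hkb : ∃ C, ∀ z a, |k z a| ≤ C)
    (h : Z → ℝ) (hhm : Measurable h) (hhb : ∃ C, ∀ z, |h z| ≤ C)
    (jstar : ℝ)
    (hacoe : ∀ z : Z,
      jstar + h z = sInf ((fun a => k z a + ∫ y, h y ∂ η z a) '' U z))
    -- the stationary Markov policy attaining the infimum:
    (gstar : Z → A) (hgm : Measurable gstar)
    (hattain : ∀ z, jstar + h z = k z (gstar z) + ∫ y, h y ∂ η z (gstar z))
    -- the process induced by `g*` from an arbitrary initial state distribution:
    (μ : Measure Ω) [IsProbabilityMeasure μ]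
    (zs : ℕ → Ω → Z) (hzm : ∀ t, Measurable (zs t))
    (hdrift : ∀ t : ℕ,
      (∫ ω, h (zs (t + 1) ω) ∂μ) =
        ∫ ω, (∫ y, h y ∂ η (zs t ω) (gstar (zs t ω))) ∂μ) :
    limsup (fun T : ℕ =>
        (1 / (T : ℝ)) * ∑ t ∈ Finset.range T, ∫ ω, k (zs t ω) (gstar (zs t ω)) ∂μ)
      atTop = jstar ∧
    -- optimality: any admissible process has average cost at least that of `g*`
    (∀ (Ω' : Type) (_ : MeasurableSpace Ω') (μ' : Measure Ω'),
      IsProbabilityMeasure μ' →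
      ∀ (zs' : ℕ → Ω' → Z) (as' : ℕ → Ω' → A),
        (∀ t, Measurable (zs' t)) → (∀ t, Measurable (as' t)) →
        (∀ t ω, as' t ω ∈ U (zs' t ω)) →
        (∀ t : ℕ, (∫ ω, h (zs' (t + 1) ω) ∂μ') =
          ∫ ω, (∫ y, h y ∂ η (zs' t ω) (as' t ω)) ∂μ') →
        limsup (fun T : ℕ =>
            (1 / (T : ℝ)) * ∑ t ∈ Finset.range T,
              ∫ ω, k (zs t ω) (gstar (zs t ω)) ∂μ) atTop ≤
          limsup (fun T : ℕ =>
            (1 / (T : ℝ)) * ∑ t ∈ Finset.range T,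
              ∫ ω, k (zs' t ω) (as' t ω) ∂μ') atTop) := by
  obtain ⟨Ck, hCk⟩ := hkb
  obtain ⟨Ch, hCh⟩ := hhb
  have hgstar : Tendsto (fun T : ℕ =>
      (1 / (T : ℝ)) * ∑ t ∈ Finset.range T, ∫ ω, k (zs t ω) (gstar (zs t ω)) ∂μ)
      atTop (𝓝 jstar) := by
    refine (tendsto_avg_telescope (b := fun t => ∫ ω, h (zs t ω) ∂μ)
      (fun t => abs_integral_le_of_abs_le_s8 fun ω => hCh _) jstar).congr fun T => ?_
    refine congrArg _ (Finset.sum_congr rfl fun t _ => ?_)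
    exact (integral_cost_eq_of_forall_eq (as := fun t ω => gstar (zs t ω)) hηm hkm hCk hhm hCh
      (hzm t) (hgm.comp (hzm t)) (hdrift t) fun ω => hattain _).symm
  have hlow : ∀ z, ∀ a ∈ U z, jstar + h z ≤ k z a + ∫ y, h y ∂η z a := by
    intro z a ha
    rw [hacoe z]
    refine csInf_le ⟨-Ck - Ch, ?_⟩ (Set.mem_image_of_mem _ ha)
    rintro _ ⟨a', -, rfl⟩
    linarith [(abs_le.1 (hCk z a')).1,
      (abs_le.1 (abs_integral_le_of_abs_le_s8 (μ := η z a') hCh)).1]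
  refine ⟨hgstar.limsup_eq, fun Ω' _ μ' _ zs' as' hzm' ham' hU' hdrift' => ?_⟩
  rw [hgstar.limsup_eq]
  exact le_limsup_avg_of_telescope_le
    (fun t => abs_integral_le_of_abs_le_s8 (μ := μ') fun ω => hCh (zs' t ω))
    (fun t => (abs_le.1 (abs_integral_le_of_abs_le_s8 fun ω => hCk (zs' t ω) (as' t ω))).2)
    fun t => add_sub_le_integral_cost_of_forall_le hηm hkm hCk hhm hCh (hzm' t) (ham' t)
      (hdrift' t) fun ω => hlow _ _ (hU' t ω)

/-- Verification theorem (achievability): if `(j*, h)` solves the ACOE and a stationary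
Markov policy `g*` attains the infimum for every state, then the long-run average cost
of `g*` from any initial state equals `j*`; hence `g*` is average-cost optimal (its
average cost is at most that of any admissible process). -/
theorem acoe_verification_achievability
    {Z A Ω : Type*} [MeasurableSpace Z] [MeasurableSpace A] [MeasurableSpace Ω]
    (U : Z → Set A)
    (η : Z → A → Measure Z) [∀ z a, IsProbabilityMeasure (η z a)]
    (hηm : Measurable fun p : Z × A => η p.1 p.2)
    (k : Z → A → ℝ) (hkm : Measurable fun p : Z × A => k p.1 p.2)
    (hkb : ∃ C, ∀ z a, |k z a| ≤ C)
    (h : Z → ℝ) (hhm : Measurable h) (hhb : ∃ C, ∀ z, |h z| ≤ C)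
    (jstar : ℝ)
    (hacoe : ∀ z : Z,
      jstar + h z = sInf ((fun a => k z a + ∫ y, h y ∂ η z a) '' U z))
    -- the stationary Markov policy attaining the infimum:
    (gstar : Z → A) (hgm : Measurable gstar) (hgU : ∀ z, gstar z ∈ U z)
    (hattain : ∀ z, jstar + h z = k z (gstar z) + ∫ y, h y ∂ η z (gstar z))
    -- the process induced by `g*` from an arbitrary initial state distribution:
    (μ : Measure Ω) [IsProbabilityMeasure μ]
    (zs : ℕ → Ω → Z) (hzm : ∀ t, Measurable (zs t))
    (hdrift : ∀ t : ℕ,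
      (∫ ω, h (zs (t + 1) ω) ∂μ) =
        ∫ ω, (∫ y, h y ∂ η (zs t ω) (gstar (zs t ω))) ∂μ) :
    limsup (fun T : ℕ =>
        (1 / (T : ℝ)) * ∑ t ∈ Finset.range T, ∫ ω, k (zs t ω) (gstar (zs t ω)) ∂μ)
      atTop = jstar ∧
    -- optimality: any admissible process has average cost at least that of `g*`
    (∀ (Ω' : Type) (_ : MeasurableSpace Ω') (μ' : Measure Ω'),
      IsProbabilityMeasure μ' →
      ∀ (zs' : ℕ → Ω' → Z) (as' : ℕ → Ω' → A),
        (∀ t, Measurable (zs' t)) → (∀ t, Measurable (as' t)) →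
        (∀ t ω, as' t ω ∈ U (zs' t ω)) →
        (∀ t : ℕ, (∫ ω, h (zs' (t + 1) ω) ∂μ') =
          ∫ ω, (∫ y, h y ∂ η (zs' t ω) (as' t ω)) ∂μ') →
        limsup (fun T : ℕ =>
            (1 / (T : ℝ)) * ∑ t ∈ Finset.range T,
              ∫ ω, k (zs t ω) (gstar (zs t ω)) ∂μ) atTop ≤
          limsup (fun T : ℕ =>
            (1 / (T : ℝ)) * ∑ t ∈ Finset.range T,
              ∫ ω, k (zs' t ω) (as' t ω) ∂μ') atTop) :=
  acoe_verification_achievability_general U η hηm k hkm hkb h hhm hhb jstar hacoe gstar hgm hattain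
    μ zs hzm hdrift
end

section
/- Passing the Bellman equation to the limit: suppose for each k, h_k : M → ℝ satisfies h_k(m) = inf_{a ∈ A(m)} ( c(m,a) + β_k ∫ h_k dη(·|m,a) ) − r_k, where β_k → 1, r_k → j*, h_k → h uniformly, each A(m) is compact, c is continuous and bounded, and η is weakly continuous in (m,a) and h is continuous. Then h satisfies h(m) = inf_{a∈A(m)} ( c(m,a) + ∫ h dη(·|m,a) ) − j* for all m ∈ M. -/
/-! The discounted Bellman right-hand sides converge to the undiscounted one uniformly on each
compact action set `A(m)`: integration against a probability kernel is 1-Lipschitz for the sup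
norm, and `β_k → 1` multiplies a function that is continuous, hence bounded, on `A(m)`. An
infimum over a fixed set is 1-Lipschitz for the sup norm too, so `inf_{A(m)}` passes to the
limit, while the left-hand sides `h_k(m) → h(m)`. -/

open MeasureTheory Filter Topology

lemma abs_csInf_image_sub_csInf_image_le {α : Type*} {S : Set α} (hS : S.Nonempty)
    {f g : α → ℝ} (hg : BddBelow (g '' S)) {δ : ℝ} (hfg : ∀ a ∈ S, |f a - g a| ≤ δ) :
    |sInf (f '' S) - sInf (g '' S)| ≤ δ := by
  have hf : BddBelow (f '' S) := by
    obtain ⟨b, hb⟩ := hg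
    refine ⟨b - δ, ?_⟩
    rintro _ ⟨a, ha, rfl⟩
    linarith [hb ⟨a, ha, rfl⟩, (abs_le.mp (hfg a ha)).1]
  have hf_le : sInf (f '' S) ≤ sInf (g '' S) + δ := by
    rw [← sub_le_iff_le_add]
    refine le_csInf (hS.image g) ?_
    rintro _ ⟨a, ha, rfl⟩
    linarith [csInf_le hf ⟨a, ha, rfl⟩, (abs_le.mp (hfg a ha)).2]
  have hg_le : sInf (g '' S) ≤ sInf (f '' S) + δ := by
    rw [← sub_le_iff_le_add]
    refine le_csInf (hS.image f) ?_
    rintro _ ⟨a, ha, rfl⟩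
    linarith [csInf_le hg ⟨a, ha, rfl⟩, (abs_le.mp (hfg a ha)).1]
  exact abs_sub_le_iff.mpr ⟨by linarith, by linarith⟩

theorem TendstoUniformlyOn.tendsto_csInf_image {ι α : Type*} {l : Filter ι} {F : ι → α → ℝ}
    {f : α → ℝ} {S : Set α} (hF : TendstoUniformlyOn F f l S) (hS : S.Nonempty)
    (hf : BddBelow (f '' S)) :
    Tendsto (fun i => sInf (F i '' S)) l (𝓝 (sInf (f '' S))) := by
  refine Metric.tendsto_nhds.mpr fun ε hε => ?_
  filter_upwards [Metric.tendstoUniformlyOn_iff.mp hF (ε / 2) (half_pos hε)] with i hi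
  rw [Real.dist_eq]
  refine (abs_csInf_image_sub_csInf_image_le hS hf fun a ha => ?_).trans_lt (half_lt_self hε)
  rw [← Real.dist_eq, dist_comm]
  exact (hi a ha).le

theorem TendstoUniformly.integral_of_isProbabilityMeasure {ι X P E : Type*} [MeasurableSpace X]
    [NormedAddCommGroup E] [NormedSpace ℝ E] {l : Filter ι} {F : ι → X → E} {f : X → E}
    (hF : TendstoUniformly F f l) (μ : P → Measure X) [∀ p, IsProbabilityMeasure (μ p)]
    (hFi : ∀ i p, Integrable (F i) (μ p)) (hfi : ∀ p, Integrable f (μ p)) :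
    TendstoUniformly (fun i p => ∫ x, F i x ∂μ p) (fun p => ∫ x, f x ∂μ p) l := by
  refine Metric.tendstoUniformly_iff.mpr fun ε hε => ?_
  filter_upwards [Metric.tendstoUniformly_iff.mp hF (ε / 2) (half_pos hε)] with i hi p
  rw [dist_eq_norm, ← integral_sub (hfi p) (hFi i p)]
  calc ‖∫ x, f x - F i x ∂μ p‖ ≤ ε / 2 * (μ p).real Set.univ :=
        norm_integral_le_of_norm_le_const (.of_forall fun x => by
          rw [← dist_eq_norm]; exact (hi x).le)
    _ < ε := by simpa using half_lt_self hε

theorem bellman_equation_limit_general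
    {M A : Type*} [MetricSpace M] [CompactSpace M] [MeasurableSpace M] [BorelSpace M]
    [MetricSpace A]
    (Act : M → Set A) (hActne : ∀ m, (Act m).Nonempty)
    (hActcpt : ∀ m, IsCompact (Act m))
    (c : M × A → ℝ) (hc : Continuous c)
    (η : M × A → Measure M) [∀ p, IsProbabilityMeasure (η p)]
    (hη : ∀ f : M → ℝ, Continuous f → Continuous fun p : M × A => ∫ x, f x ∂ η p)
    (β : ℕ → ℝ)
    (hβ1 : Tendsto β atTop (nhds 1))
    (r : ℕ → ℝ) (jstar : ℝ) (hr : Tendsto r atTop (nhds jstar))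
    (hk : ℕ → M → ℝ) (hkc : ∀ n, Continuous (hk n))
    (h : M → ℝ) (hhc : Continuous h)
    (hunif : TendstoUniformly hk h atTop)
    (hbell : ∀ n : ℕ, ∀ m : M,
      hk n m = sInf ((fun a => c (m, a) + β n * ∫ x, hk n x ∂ η (m, a)) '' Act m) - r n) :
    ∀ m : M, h m = sInf ((fun a => c (m, a) + ∫ x, h x ∂ η (m, a)) '' Act m) - jstar := by
  intro m
  have hint (f : M → ℝ) (hf : Continuous f) (p : M × A) : Integrable f (η p) :=
    hf.integrable_of_hasCompactSupport (.of_compactSpace f)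
  have hsec : Continuous fun a : A => (m, a) := .prodMk_right m
  have hrhs_cont : Continuous fun a => c (m, a) + ∫ x, h x ∂η (m, a) :=
    (hc.comp hsec).add ((hη h hhc).comp hsec)
  have hintegral : TendstoUniformlyOn (fun n a => ∫ x, hk n x ∂η (m, a))
      (fun a => ∫ x, h x ∂η (m, a)) atTop (Act m) :=
    ((hunif.integral_of_isProbabilityMeasure η (fun n => hint _ (hkc n)) (hint h hhc)).comp
      fun a => (m, a)).tendstoUniformlyOn
  have hdiscounted : TendstoUniformlyOn (fun n a => β n * ∫ x, hk n x ∂η (m, a))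
      (fun a => ∫ x, h x ∂η (m, a)) atTop (Act m) := by
    rw [← tendstoLocallyUniformlyOn_iff_tendstoUniformlyOn_of_compact (hActcpt m)] at hintegral ⊢
    simpa only [one_mul] using
      (hβ1.tendstoUniformlyOn_const _).tendstoLocallyUniformlyOn.fun_mul₀ hintegral
        continuousOn_const ((hη h hhc).comp hsec).continuousOn
  have hcost : TendstoUniformlyOn (fun (_ : ℕ) a => c (m, a)) (fun a => c (m, a)) atTop (Act m) :=
    fun _ hu => .of_forall fun _ _ _ => refl_mem_uniformity hu
  have hrhs := ((hcost.fun_add hdiscounted).tendsto_csInf_image (hActne m)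
    ((hActcpt m).image hrhs_cont).bddBelow).sub hr
  simp only [← hbell] at hrhs
  exact tendsto_nhds_unique (hunif.tendsto_at m) hrhs

/-- Passing the Bellman equation to the limit: if `h_k` satisfies the `β_k`-discounted
relative Bellman equation
`h_k(m) = inf_{a∈A(m)} ( c(m,a) + β_k ∫ h_k dη(·|m,a) ) − r_k`,
with `β_k → 1`, `r_k → j*`, `h_k → h` uniformly, compact admissible sets, continuous
bounded cost, weakly continuous kernel, and `h` continuous, then `h` satisfies the ACOE
`h(m) = inf_{a∈A(m)} ( c(m,a) + ∫ h dη(·|m,a) ) − j*`. -/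
theorem bellman_equation_limit
    {M A : Type*} [MetricSpace M] [CompactSpace M] [MeasurableSpace M] [BorelSpace M]
    [MetricSpace A]
    (Act : M → Set A) (hActne : ∀ m, (Act m).Nonempty)
    (hActcpt : ∀ m, IsCompact (Act m))
    (c : M × A → ℝ) (hc : Continuous c) (hcb : ∃ C, ∀ p, |c p| ≤ C)
    (η : M × A → Measure M) [∀ p, IsProbabilityMeasure (η p)]
    (hη : ∀ f : M → ℝ, Continuous f → Continuous fun p : M × A => ∫ x, f x ∂ η p)
    (β : ℕ → ℝ) (hβ : ∀ k, β k ∈ Set.Ioo (0 : ℝ) 1)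
    (hβ1 : Tendsto β atTop (nhds 1))
    (r : ℕ → ℝ) (jstar : ℝ) (hr : Tendsto r atTop (nhds jstar))
    (hk : ℕ → M → ℝ) (hkc : ∀ n, Continuous (hk n))
    (h : M → ℝ) (hhc : Continuous h)
    (hunif : TendstoUniformly hk h atTop)
    (hbell : ∀ n : ℕ, ∀ m : M,
      hk n m = sInf ((fun a => c (m, a) + β n * ∫ x, hk n x ∂ η (m, a)) '' Act m) - r n) :
    ∀ m : M, h m = sInf ((fun a => c (m, a) + ∫ x, h x ∂ η (m, a)) '' Act m) - jstar :=
  bellman_equation_limit_general Act hActne hActcpt c hc η hη β hβ1 r jstar hr hk hkc h hhc hunif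
    hbell
end
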